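/- For n > 3 and 0 ≤ k < n, the conditional probability f(n,k,0) satisfies the two-sided bound 1/n - (k/(n²(n-1)))·(n/(n-1)) ≤ f(n,k,0) ≤ 1/n - (k/(n²(n-1)))·((n-3)/(n-2)). -/

import Mathlib

/-!
Write `D n k = c n k 0`. Splitting according to whether the point `k + 1` is fixed gives
`D n k = D n (k + 1) + D (n - 1) k`, and induction on `k` turns this into
`D n k = n D (n - 1) k + k D (n - 2) (k - 1)`. Hence
`f n k 0 = 1 / n - (k / n) · D (n - 2) (k - 1) / D n k`, and the two bounds are the estimates
`(n - 1)² D (n - 2) (k - 1) ≤ D n k ≤ n (n - 1) (n - 2) / (n - 3) · D (n - 2) (k - 1)`.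
Both follow by feeding back into the two identities the inequalities `n D (n - 1) k ≤ D n k` and
`(n - 1) D (n - 1) k ≤ D n (k + 1)` that they immediately give.
-/

/-- `c n k d` : number of permutations of `{1,...,n}` (modeled as `Fin n`)
with exactly `d` fixed points among the first `k` points. -/
noncomputable def c (n k d : ℕ) : ℕ :=
  Nat.card {α : Equiv.Perm (Fin n) //
    (Finset.univ.filter (fun i : Fin n => (i : ℕ) < k ∧ α i = i)).card = d}

/-- `p n k d = c n k d / n!`, the probability that a uniformly random permutation
of `[n]` has exactly `d` fixed points among the first `k` points. -/
noncomputable def p (n k d : ℕ) : ℝ := (c n k d : ℝ) / (Nat.factorial n)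

/-- `f n k d = c (n-1) k d / c n k d`, the conditional probability that the
`(k+1)`-st point is fixed given exactly `d` fixed points among the first `k` points. -/
noncomputable def f (n k d : ℕ) : ℝ := (c (n - 1) k d : ℝ) / (c n k d)

open Equiv Nat

def NoFixedPointBelow {n : ℕ} (k : ℕ) (σ : Perm (Fin n)) : Prop :=
  ∀ i : Fin n, (i : ℕ) < k → σ i ≠ i

theorem c_zero_eq_natCard (n k : ℕ) :
    c n k 0 = Nat.card {σ : Perm (Fin n) // NoFixedPointBelow k σ} :=
  Nat.card_congr <| subtypeEquivRight fun σ => by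
    simp [NoFixedPointBelow, Finset.filter_eq_empty_iff]

theorem c_zero_zero (n : ℕ) : c n 0 0 = n ! := by
  simp [c_zero_eq_natCard, NoFixedPointBelow, Fintype.card_perm]

theorem c_zero_pos (m k : ℕ) : 0 < c (m + 2) k 0 := by
  rw [c_zero_eq_natCard]
  have hrot : NoFixedPointBelow k (finRotate (m + 2)) := fun i _ =>
    Perm.mem_support.1 (support_finRotate ▸ Finset.mem_univ i)
  have : Nonempty {σ // NoFixedPointBelow k σ} := ⟨⟨_, hrot⟩⟩
  exact Nat.card_pos

def permFixingEquiv {m : ℕ} (K : Fin (m + 1)) :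
    Perm (Fin m) ≃ {σ : Perm (Fin (m + 1)) // σ K = K} :=
  (finSuccAboveEquiv K).permCongr.trans <|
    (Perm.subtypeEquivSubtypePerm (· ≠ K)).trans <| subtypeEquivRight fun σ => by simp

theorem permFixingEquiv_apply_succAbove {m : ℕ} (K : Fin (m + 1)) (τ : Perm (Fin m))
    (i : Fin m) :
    (permFixingEquiv K τ : Perm (Fin (m + 1))) (K.succAbove i) = K.succAbove (τ i) := by
  rw [permFixingEquiv, trans_apply, trans_apply, subtypeEquivRight_apply, Subtype.coe_mk,
    Perm.subtypeEquivSubtypePerm_apply_of_mem (p := (· ≠ K)) _ (K.succAbove_ne i)]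
  change ((finSuccAboveEquiv K).permCongr τ (finSuccAboveEquiv K i)).1 = _
  simp [permCongr_apply, symm_apply_eq, finSuccAboveEquiv_apply]

theorem noFixedPointBelow_permFixingEquiv_iff {m k : ℕ} (hk : k ≤ m) (τ : Perm (Fin m)) :
    NoFixedPointBelow k (permFixingEquiv ⟨k, Nat.lt_succ_of_le hk⟩ τ : Perm (Fin (m + 1))) ↔
      NoFixedPointBelow k τ := by
  have hbelow (i : Fin m) (hi : (i : ℕ) < k) :
      (⟨k, Nat.lt_succ_of_le hk⟩ : Fin (m + 1)).succAbove i = i.castSucc :=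
    Fin.succAbove_of_castSucc_lt _ _ hi
  constructor
  · intro h i hi hfix
    apply h i.castSucc hi
    rw [← hbelow i hi, permFixingEquiv_apply_succAbove, hfix]
  · intro h j hj
    obtain ⟨i, rfl⟩ : ∃ i : Fin m, i.castSucc = j := ⟨j.castLT (by omega), rfl⟩
    rw [← hbelow i hj, permFixingEquiv_apply_succAbove]
    exact fun hfix => h i hj (Fin.succAbove_right_injective hfix)

theorem noFixedPointBelow_succ_iff {m k : ℕ} (hk : k ≤ m) (σ : Perm (Fin (m + 1))) :
    NoFixedPointBelow (k + 1) σ ↔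
      NoFixedPointBelow k σ ∧ σ ⟨k, Nat.lt_succ_of_le hk⟩ ≠ ⟨k, Nat.lt_succ_of_le hk⟩ := by
  simp only [NoFixedPointBelow, Nat.lt_succ_iff_lt_or_eq, or_imp, forall_and]
  refine and_congr_right fun _ => ⟨fun h => h _ rfl, fun h i hi => ?_⟩
  rwa [show i = ⟨k, _⟩ from Fin.ext hi]

theorem c_zero_eq_add {m k : ℕ} (hk : k ≤ m) : c (m + 1) k 0 = c (m + 1) (k + 1) 0 + c m k 0 := by
  -- `K` is the paper's point `k + 1`
  set K : Fin (m + 1) := ⟨k, Nat.lt_succ_of_le hk⟩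
  have hmoved : Nat.card {σ : {σ : Perm (Fin (m + 1)) // NoFixedPointBelow k σ} // ¬σ.1 K = K} =
      c (m + 1) (k + 1) 0 := by
    rw [c_zero_eq_natCard]
    exact Nat.card_congr <| (subtypeSubtypeEquivSubtypeInter _ _).trans <|
      subtypeEquivRight fun σ => (noFixedPointBelow_succ_iff hk σ).symm
  have hfixed : Nat.card {σ : {σ : Perm (Fin (m + 1)) // NoFixedPointBelow k σ} // σ.1 K = K} =
      c m k 0 := by
    rw [c_zero_eq_natCard]
    exact Nat.card_congr <|
      (subtypeSubtypeEquivSubtypeInter _ (fun σ : Perm (Fin (m + 1)) => σ K = K)).trans <|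
      (subtypeEquivRight fun σ => and_comm).trans <|
      (subtypeSubtypeEquivSubtypeInter (fun σ : Perm (Fin (m + 1)) => σ K = K) _).symm.trans <|
      ((permFixingEquiv K).subtypeEquiv fun τ =>
        (noFixedPointBelow_permFixingEquiv_iff hk τ).symm).symm
  rw [c_zero_eq_natCard, ← hmoved, ← hfixed, ← Nat.card_sum]
  exact Nat.card_congr ((sumCompl _).symm.trans (sumComm _ _))

theorem c_zero_add_two_succ {m j : ℕ} (hj : j ≤ m) :
    c (m + 2) (j + 1) 0 = (m + 2) * c (m + 1) (j + 1) 0 + (j + 1) * c m j 0 := by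
  induction j generalizing m with
  | zero =>
    have h₁ : c (m + 2) 0 0 = c (m + 2) 1 0 + c (m + 1) 0 0 := c_zero_eq_add (Nat.zero_le _)
    have h₂ : c (m + 1) 0 0 = c (m + 1) 1 0 + c m 0 0 := c_zero_eq_add (Nat.zero_le _)
    simp only [c_zero_zero, factorial_succ] at h₁ h₂ ⊢
    zify at h₁ h₂ ⊢
    linear_combination -h₁ + (m + 2 : ℤ) * h₂
  | succ j ih =>
    obtain ⟨m, rfl⟩ : ∃ m', m = m' + 1 := ⟨m - 1, by omega⟩
    have h₁ : c (m + 3) (j + 1) 0 = c (m + 3) (j + 2) 0 + c (m + 2) (j + 1) 0 :=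
      c_zero_eq_add (by omega)
    have h₂ : c (m + 2) (j + 1) 0 = c (m + 2) (j + 2) 0 + c (m + 1) (j + 1) 0 :=
      c_zero_eq_add (by omega)
    have h₃ : c (m + 1) j 0 = c (m + 1) (j + 1) 0 + c m j 0 := c_zero_eq_add (by omega)
    have ih₁ : c (m + 3) (j + 1) 0 = (m + 3) * c (m + 2) (j + 1) 0 + (j + 1) * c (m + 1) j 0 :=
      ih (by omega)
    have ih₂ : c (m + 2) (j + 1) 0 = (m + 2) * c (m + 1) (j + 1) 0 + (j + 1) * c m j 0 :=
      ih (by omega)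
    zify at h₁ h₂ h₃ ih₁ ih₂ ⊢
    linear_combination -h₁ + (m + 3 : ℤ) * h₂ + (j + 1 : ℤ) * h₃ + ih₁ - ih₂

theorem succ_mul_c_zero_le {m j : ℕ} (hj : j ≤ m) : (m + 1) * c m j 0 ≤ c (m + 1) j 0 := by
  rcases j with _ | j
  · simp [c_zero_zero, factorial_succ]
  · obtain ⟨m, rfl⟩ : ∃ m', m = m' + 1 := ⟨m - 1, by omega⟩
    rw [c_zero_add_two_succ (by omega)]
    exact Nat.le_add_right _ _

theorem mul_c_zero_le_c_zero_succ_succ {m j : ℕ} (hj : j ≤ m) :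
    m * c m j 0 ≤ c (m + 1) (j + 1) 0 := by
  have := succ_mul_c_zero_le hj
  rw [c_zero_eq_add hj, add_one_mul] at this
  omega

theorem mul_c_zero_le_mul {m j : ℕ} (hj : j ≤ m + 1) :
    m * c (m + 2) j 0 ≤ ((m + 2) * m + j) * c (m + 1) j 0 := by
  rcases j with _ | j
  · rw [c_zero_zero, c_zero_zero, factorial_succ (m + 1)]
    exact le_of_eq (by ring)
  · rw [c_zero_add_two_succ (by omega)]
    have := mul_c_zero_le_c_zero_succ_succ (m := m) (j := j) (by omega)
    nlinarith

theorem sq_mul_c_zero_le {n k : ℕ} (hk : k ≤ n) : (n + 1) ^ 2 * c n k 0 ≤ c (n + 2) (k + 1) 0 :=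
  calc (n + 1) ^ 2 * c n k 0 = (n + 1) * ((n + 1) * c n k 0) := by ring
    _ ≤ (n + 1) * c (n + 1) k 0 := Nat.mul_le_mul_left _ (succ_mul_c_zero_le hk)
    _ ≤ c (n + 2) (k + 1) 0 := mul_c_zero_le_c_zero_succ_succ (by omega)

theorem mul_c_zero_le_mul_c_zero {n k : ℕ} (hk : k ≤ n + 1) :
    n * c (n + 3) (k + 1) 0 ≤ (n + 3) * (n + 2) * (n + 1) * c (n + 1) k 0 := by
  have hid : c (n + 3) (k + 1) 0 = (n + 3) * c (n + 2) (k + 1) 0 + (k + 1) * c (n + 1) k 0 :=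
    c_zero_add_two_succ hk
  have hrec : c (n + 2) k 0 = c (n + 2) (k + 1) 0 + c (n + 1) k 0 := c_zero_eq_add hk
  have hup := mul_c_zero_le_mul (m := n) hk
  zify at hid hrec hup ⊢
  have hY : (n : ℤ) * c (n + 2) (k + 1) 0 ≤ (n ^ 2 + n + k) * c (n + 1) k 0 := by
    rw [hrec] at hup
    linarith
  have hslack : (0 : ℤ) ≤ ((2 * n + 3) * (n + 1 - k) + (2 * n + 3)) * c (n + 1) k 0 := by
    have : (0 : ℤ) ≤ n + 1 - k := by omega
    positivity
  calc (n : ℤ) * c (n + 3) (k + 1) 0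
      = (n + 3) * (n * c (n + 2) (k + 1) 0) + n * (k + 1) * c (n + 1) k 0 := by rw [hid]; ring
    _ ≤ (n + 3) * ((n ^ 2 + n + k) * c (n + 1) k 0) + n * (k + 1) * c (n + 1) k 0 := by
      gcongr ?_ + _
      exact mul_le_mul_of_nonneg_left hY (by positivity)
    _ ≤ (n + 3) * (n + 2) * (n + 1) * c (n + 1) k 0 := by linarith

theorem f_zero {n : ℕ} (hn : 0 < n) : f n 0 0 = 1 / n := by
  obtain ⟨m, rfl⟩ : ∃ m, n = m + 1 := ⟨n - 1, by omega⟩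
  rw [f, c_zero_zero, c_zero_zero, Nat.add_sub_cancel, factorial_succ]
  push_cast
  field_simp

theorem f_succ {m k : ℕ} (hk : k ≤ m) :
    f (m + 2) (k + 1) 0 = 1 / (m + 2) - (k + 1) / (m + 2) * (c m k 0 / c (m + 2) (k + 1) 0) := by
  have hY : (0 : ℝ) < c (m + 2) (k + 1) 0 := by exact_mod_cast c_zero_pos m (k + 1)
  have hid : (c (m + 2) (k + 1) 0 : ℝ) = (m + 2) * c (m + 1) (k + 1) 0 + (k + 1) * c m k 0 := by
    exact_mod_cast c_zero_add_two_succ hk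
  rw [f, show m + 2 - 1 = m + 1 from rfl]
  field_simp
  linarith

theorem c_zero_div_le {m k : ℕ} (hk : k ≤ m) :
    (c m k 0 / c (m + 2) (k + 1) 0 : ℝ) ≤ 1 / (m + 1) ^ 2 := by
  have h : ((m + 1) ^ 2 * c m k 0 : ℝ) ≤ c (m + 2) (k + 1) 0 := by
    exact_mod_cast sq_mul_c_zero_le hk
  rw [div_le_div_iff₀ (by exact_mod_cast c_zero_pos m (k + 1)) (by positivity)]
  linarith

theorem le_c_zero_div {m k : ℕ} (hm : 0 < m) (hk : k ≤ m) :
    ((m - 1 : ℝ) / ((m + 2) * (m + 1) * m)) ≤ c m k 0 / c (m + 2) (k + 1) 0 := by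
  obtain ⟨m, rfl⟩ : ∃ m', m = m' + 1 := ⟨m - 1, by omega⟩
  have h : ((m : ℝ) * c (m + 3) (k + 1) 0) ≤ (m + 3) * (m + 2) * (m + 1) * c (m + 1) k 0 := by
    exact_mod_cast mul_c_zero_le_mul_c_zero hk
  rw [div_le_div_iff₀ (by positivity) (by exact_mod_cast c_zero_pos (m + 1) (k + 1))]
  push_cast
  linarith

theorem stmt18 (n k : ℕ) (hn : 3 < n) (hk : k < n) :
    1 / (n : ℝ) - ((k : ℝ) / ((n : ℝ) ^ 2 * ((n : ℝ) - 1))) * ((n : ℝ) / ((n : ℝ) - 1))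
        ≤ f n k 0 ∧
    f n k 0 ≤
      1 / (n : ℝ) - ((k : ℝ) / ((n : ℝ) ^ 2 * ((n : ℝ) - 1))) * (((n : ℝ) - 3) / ((n : ℝ) - 2)) := by
  rcases k with _ | k
  · simp [f_zero hk]
  obtain ⟨m, rfl⟩ : ∃ m, n = m + 2 := ⟨n - 2, by omega⟩
  rw [f_succ (by omega : k ≤ m)]
  push_cast
  rw [show (m : ℝ) + 2 - 1 = m + 1 by ring, show (m : ℝ) + 2 - 2 = m by ring,
    show (m : ℝ) + 2 - 3 = m - 1 by ring]
  constructor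
  · gcongr 1 / _ - ?_
    calc _ ≤ (k + 1) / (m + 2) * (1 / (m + 1) ^ 2 : ℝ) :=
          mul_le_mul_of_nonneg_left (c_zero_div_le (by omega)) (by positivity)
      _ = _ := by field_simp
  · gcongr 1 / _ - ?_
    calc _ = (k + 1) / (m + 2) * ((m - 1) / ((m + 2) * (m + 1) * m) : ℝ) := by field_simp
      _ ≤ _ := mul_le_mul_of_nonneg_left (le_c_zero_div (by omega) (by omega)) (by positivity)
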